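/- arXiv:0911.5547 — 5 statements merged into one kernel-verified Lean document; each statement's English description precedes it below -/
import Mathlib

section
/- (Granville–Soundararajan identity.) Let b and r be integers with gcd(b, r) = 1, b ≠ 0 and r ≥ 1. Then for every completely multiplicative f : ℕ → ℂ with |f(n)| ≤ 1 for all n, every N ≥ 2, and every y ≥ 2: ∑_{n ≤ N, n ∈ 𝒮(y)} (f(n)/n)·e((b/r)·n) = ∑_{d | r, d ∈ 𝒮(y)} (f(d)/d)·(1/φ(r/d))·∑_{ψ mod r/d} τ(ψ)·conj(ψ)(b)·(∑_{n ≤ N/d, n ∈ 𝒮(y)} f(n)·conj(ψ)(n)/n), where the middle sum is over all Dirichlet characters ψ modulo r/d. -/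
open Complex Finset
open scoped Classical

noncomputable section

/-- `e(x) = exp(2πix)`. -/
def eC (x : ℝ) : ℂ := Complex.exp (2 * Real.pi * Complex.I * x)

/-- `n` is `y`-smooth: every prime factor of `n` is at most `y`. -/
def YSmooth (y : ℝ) (n : ℕ) : Prop := ∀ p : ℕ, p.Prime → p ∣ n → (p : ℝ) ≤ y

/-- `𝔻(f,g;X)² = ∑_{p ≤ X prime} (1 - Re (f p * conj (g p)))/p`. -/
def Dsq (f g : ℕ → ℂ) (X : ℝ) : ℝ :=
  ∑ p ∈ (Finset.range (⌊X⌋₊ + 1)).filter Nat.Prime,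
    (1 - (f p * (starRingEnd ℂ) (g p)).re) / p

/-- `𝕄(f; X, T) = min_{|t| ≤ T} 𝔻(f(n), n^{it}; X)²`. -/
def Mm (f : ℕ → ℂ) (X T : ℝ) : ℝ :=
  sInf ((fun t : ℝ => Dsq f (fun n => (n : ℂ) ^ (Complex.I * (t : ℂ))) X) '' Set.Icc (-T) T)

/-- The twist `n ↦ f(n) · conj(ψ(n))` of `f` by the conjugate of a Dirichlet character. -/
def twist {m : ℕ} (f : ℕ → ℂ) (ψ : DirichletCharacter ℂ m) : ℕ → ℂ :=
  fun n => f n * (starRingEnd ℂ) (ψ (n : ZMod m))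

/-- `∑_{n ≤ x, n ∈ 𝒮(y)} (f(n)/n) e(nα)`. -/
def smoothExpSum (f : ℕ → ℂ) (x y α : ℝ) : ℂ :=
  ∑ n ∈ (Finset.Icc 1 ⌊x⌋₊).filter (fun n => YSmooth y n), f n / n * eC (n * α)

/-- `f` is completely multiplicative with values in the closed complex unit disc. -/
def CMUnit (f : ℕ → ℂ) : Prop :=
  f 1 = 1 ∧ (∀ a b : ℕ, f (a * b) = f a * f b) ∧ ∀ n : ℕ, ‖f n‖ ≤ 1

/-- `δ_g = 1 - (g/π)·sin(π/g)`. -/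
def deltaOrd (g : ℕ) : ℝ := 1 - ((g : ℝ) / Real.pi) * Real.sin (Real.pi / g)

end

/-- The Gauss sum `τ(ψ) = ∑_{n ≤ q} ψ(n) e(n/q)`. -/
noncomputable def gaussSum' {q : ℕ} (ψ : DirichletCharacter ℂ q) : ℂ :=
  ∑ n ∈ Finset.Icc 1 q, ψ (n : ZMod q) * eC ((n : ℝ) / q)

/-!
Group the `n ≤ N` by `d = gcd(n, r)` and write `n = d m`: then `e(bn/r) = e(bm/(r/d))`, and
`gcd(n, r) = d` exactly when `m` is coprime to `r/d`. For `q ≥ 1` and `z` mod `q`, orthogonality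
of Dirichlet characters inverts the Gauss sums: `(1/φ(q)) ∑_ψ τ(ψ) ψ̄(z)` is `e(z/q)` when `z` is
a unit and `0` otherwise, so expanding the right-hand side over `m` recovers exactly the terms
with `m` coprime to `r/d`.
-/

lemma eC_intCast_div (q : ℕ) [NeZero q] (w : ℤ) :
    eC ((w : ℝ) / q) = ZMod.stdAddChar (w : ZMod q) := by
  rw [ZMod.stdAddChar_coe, eC]
  push_cast
  ring_nf

lemma eC_natCast_div (q : ℕ) [NeZero q] (n : ℕ) :
    eC ((n : ℝ) / q) = ZMod.stdAddChar (n : ZMod q) := by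
  simpa only [Int.cast_natCast] using eC_intCast_div q n

lemma sum_Icc_one_natCast_eq_sum_univ {M : Type*} [AddCommMonoid M] (q : ℕ) [NeZero q]
    (F : ZMod q → M) : ∑ n ∈ Icc 1 q, F n = ∑ a, F a := by
  -- `q ∈ Icc 1 q` represents the residue `0`, hence the shifted inverse `a ↦ (a - 1).val + 1`.
  refine Finset.sum_nbij' (fun n => (n : ZMod q)) (fun a => (a - 1).val + 1) ?_ ?_ ?_ ?_ ?_
  · simp
  · intro a _
    simpa [Nat.succ_le_iff] using ZMod.val_lt (a - 1)
  · intro n hn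
    obtain ⟨h1, h2⟩ := Finset.mem_Icc.mp hn
    obtain ⟨k, rfl⟩ := Nat.exists_eq_add_of_le' h1
    simp [ZMod.val_cast_of_lt (by omega : k < q)]
  · intro a _
    simp
  · intro _ _
    rfl

lemma gaussSum'_eq_gaussSum {q : ℕ} [NeZero q] (ψ : DirichletCharacter ℂ q) :
    gaussSum' ψ = gaussSum ψ ZMod.stdAddChar := by
  simp only [gaussSum', eC_natCast_div]
  exact sum_Icc_one_natCast_eq_sum_univ q fun a => ψ a * ZMod.stdAddChar a

lemma DirichletCharacter.conj_apply_of_isUnit {q : ℕ} (ψ : DirichletCharacter ℂ q) {z : ZMod q}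
    (hz : IsUnit z) : (starRingEnd ℂ) (ψ z) = ψ z⁻¹ := by
  rw [← Complex.star_def, MulChar.star_apply', MulChar.inv_apply_eq_inv']
  refine inv_eq_of_mul_eq_one_right ?_
  rw [← map_mul, ZMod.mul_inv_of_unit z hz, map_one]

lemma sum_gaussSum_mul_conj_apply {q : ℕ} [NeZero q] (e : AddChar (ZMod q) ℂ) (z : ZMod q) :
    ∑ ψ : DirichletCharacter ℂ q, gaussSum ψ e * (starRingEnd ℂ) (ψ z) =
      if IsUnit z then (q.totient : ℂ) * e z else 0 := by
  split_ifs with hz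
  · calc ∑ ψ : DirichletCharacter ℂ q, gaussSum ψ e * (starRingEnd ℂ) (ψ z)
        = ∑ a, e a * ∑ ψ : DirichletCharacter ℂ q, ψ z⁻¹ * ψ a := by
          simp only [DirichletCharacter.conj_apply_of_isUnit _ hz, gaussSum, Finset.sum_mul,
            Finset.mul_sum]
          rw [Finset.sum_comm]
          exact Finset.sum_congr rfl fun _ _ => Finset.sum_congr rfl fun _ _ => by ring
      _ = (q.totient : ℂ) * e z := by
          simp only [DirichletCharacter.sum_char_inv_mul_char_eq ℂ hz, mul_ite, mul_zero,
            Finset.sum_ite_eq, Finset.mem_univ, if_true]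
          ring
  · simp [MulChar.map_nonunit _ hz]

lemma inv_totient_mul_sum_gaussSum'_mul_conj {q : ℕ} [NeZero q] (z : ZMod q) :
    1 / (q.totient : ℂ) * ∑ ψ : DirichletCharacter ℂ q, gaussSum' ψ * (starRingEnd ℂ) (ψ z) =
      if IsUnit z then ZMod.stdAddChar z else 0 := by
  have hφ : (q.totient : ℂ) ≠ 0 := Nat.cast_ne_zero.mpr (Nat.totient_pos.mpr (NeZero.pos q)).ne'
  simp only [gaussSum'_eq_gaussSum, sum_gaussSum_mul_conj_apply, mul_ite, mul_zero, one_div,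
    inv_mul_cancel_left₀ hφ]

lemma ySmooth_mul_iff {y : ℝ} {a b : ℕ} : YSmooth y (a * b) ↔ YSmooth y a ∧ YSmooth y b :=
  ⟨fun h => ⟨fun p hp hpa => h p hp (hpa.mul_right b), fun p hp hpb => h p hp (hpb.mul_left a)⟩,
    fun ⟨ha, hb⟩ p hp hpab => (hp.dvd_mul.mp hpab).elim (ha p hp) (hb p hp)⟩

lemma Nat.gcd_mul_eq_left_iff_coprime_div {d r m : ℕ} (hd : 0 < d) (hdr : d ∣ r) :
    (d * m).gcd r = d ↔ m.Coprime (r / d) := by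
  obtain ⟨k, rfl⟩ := hdr
  rw [Nat.gcd_mul_left, Nat.mul_div_cancel_left k hd, Nat.Coprime]
  exact ⟨fun h => Nat.eq_of_mul_eq_mul_left hd (h.trans (mul_one d).symm),
    fun h => by rw [h, mul_one]⟩

section MultiplicativelyClosed

variable {M : Type*} [AddCommMonoid M] {P : ℕ → Prop}

lemma sum_filter_gcd_eq_sum_coprime (hP : ∀ a b, P (a * b) ↔ P a ∧ P b) {r d : ℕ} (hd : 0 < d)
    (hdr : d ∣ r) (hPd : P d) (K : ℕ) (g : ℕ → M) :
    ∑ n ∈ (Icc 1 K).filter (fun n => P n ∧ n.gcd r = d), g n =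
      ∑ m ∈ (Icc 1 (K / d)).filter (fun m => P m ∧ m.Coprime (r / d)), g (d * m) := by
  have mul_mem_iff (k : ℕ) : d * k ∈ (Icc 1 K).filter (fun n => P n ∧ n.gcd r = d) ↔
      k ∈ (Icc 1 (K / d)).filter (fun m => P m ∧ m.Coprime (r / d)) := by
    simp only [Finset.mem_filter, Finset.mem_Icc, hP, hPd, true_and,
      Nat.gcd_mul_eq_left_iff_coprime_div hd hdr, Nat.le_div_iff_mul_le hd, Nat.one_le_iff_ne_zero,
      mul_ne_zero_iff, hd.ne', ne_eq, not_false_eq_true]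
    rw [mul_comm d k]
  have dvd_of_mem {n : ℕ} (hn : n ∈ (Icc 1 K).filter (fun n => P n ∧ n.gcd r = d)) : d ∣ n := by
    simp only [Finset.mem_filter] at hn
    exact hn.2.2 ▸ Nat.gcd_dvd_left n r
  symm
  refine Finset.sum_nbij' (d * ·) (· / d) (fun k hk => (mul_mem_iff k).mpr hk) ?_
    (fun k _ => Nat.mul_div_cancel_left k hd) ?_ fun _ _ => rfl
  · intro n hn
    obtain ⟨k, rfl⟩ := dvd_of_mem hn
    simpa only [Nat.mul_div_cancel_left k hd] using (mul_mem_iff k).mp hn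
  · intro n hn
    exact Nat.mul_div_cancel' (dvd_of_mem hn)

lemma sum_filter_Icc_eq_sum_divisors_sum_coprime (hP : ∀ a b, P (a * b) ↔ P a ∧ P b) {r : ℕ}
    (hr : r ≠ 0) (K : ℕ) (g : ℕ → M) :
    ∑ n ∈ (Icc 1 K).filter P, g n =
      ∑ d ∈ r.divisors.filter P, ∑ m ∈ (Icc 1 (K / d)).filter P,
        if m.Coprime (r / d) then g (d * m) else 0 := by
  have hgcd : ∀ n ∈ (Icc 1 K).filter P, n.gcd r ∈ r.divisors.filter P := by
    intro n hn
    simp only [Finset.mem_filter, Nat.mem_divisors] at hn ⊢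
    refine ⟨⟨Nat.gcd_dvd_right n r, hr⟩, ?_⟩
    obtain ⟨c, hc⟩ := Nat.gcd_dvd_left n r
    exact ((hP _ c).mp (hc ▸ hn.2)).1
  rw [← Finset.sum_fiberwise_of_maps_to hgcd]
  refine Finset.sum_congr rfl fun d hd => ?_
  simp only [Finset.mem_filter, Nat.mem_divisors] at hd
  rw [← Finset.sum_filter, Finset.filter_filter, Finset.filter_filter]
  exact sum_filter_gcd_eq_sum_coprime hP (Nat.pos_of_dvd_of_pos hd.1.1 (Nat.pos_of_ne_zero hr))
    hd.1.1 hd.2 K g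

end MultiplicativelyClosed

lemma divisor_term_eq_sum_coprime {f : ℕ → ℂ} (hf : ∀ a b, f (a * b) = f a * f b) {b : ℤ}
    {r d : ℕ} (hbr : IsCoprime b r) (hd : d ∈ r.divisors) (S : Finset ℕ) :
    f d / d * (1 / ((r / d).totient : ℂ)) *
        ∑ ψ : DirichletCharacter ℂ (r / d), gaussSum' ψ * (starRingEnd ℂ) (ψ (b : ZMod (r / d))) *
          ∑ n ∈ S, f n * (starRingEnd ℂ) (ψ (n : ZMod (r / d))) / n =
      ∑ m ∈ S, if m.Coprime (r / d) then f (d * m) / ↑(d * m) * eC ((b : ℝ) / r * ↑(d * m))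
        else 0 := by
  obtain ⟨hdr, hr⟩ := Nat.mem_divisors.mp hd
  set q := r / d
  have hrq : r = d * q := (Nat.mul_div_cancel' hdr).symm
  have hd0 : d ≠ 0 := (Nat.pos_of_mem_divisors hd).ne'
  have : NeZero q := ⟨fun h => hr (by rw [hrq, h, mul_zero])⟩
  have hb : IsUnit (b : ZMod q) := (ZMod.coe_int_isUnit_iff_isCoprime b q).mpr
    (hbr.symm.of_isCoprime_of_dvd_left (Int.natCast_dvd_natCast.mpr (hrq ▸ dvd_mul_left q d)))
  calc _ = ∑ m ∈ S, f d * f m / (d * m) * (1 / (q.totient : ℂ) * ∑ ψ : DirichletCharacter ℂ q,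
        gaussSum' ψ * (starRingEnd ℂ) (ψ ((b : ZMod q) * (m : ZMod q)))) := by
        simp only [Finset.mul_sum, map_mul]
        rw [Finset.sum_comm]
        refine Finset.sum_congr rfl fun m _ => Finset.sum_congr rfl fun ψ _ => ?_
        ring
    _ = _ := by
        refine Finset.sum_congr rfl fun m _ => ?_
        rw [inv_totient_mul_sum_gaussSum'_mul_conj]
        simp only [IsUnit.mul_iff, ZMod.isUnit_iff_coprime, hb, true_and]
        split_ifs
        · have hbm : (b : ZMod q) * (m : ZMod q) = ((b * m : ℤ) : ZMod q) := by push_cast; ring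
          rw [hbm, ← eC_intCast_div, hf, Nat.cast_mul, hrq]
          congr 2
          push_cast
          field_simp
        · rw [mul_zero]

theorem statement7_general (b : ℤ) (r : ℕ) (hr : 1 ≤ r) (hgcd : Int.gcd b r = 1)
    (f : ℕ → ℂ) (hf : CMUnit f) (N y : ℝ) :
    (∑ n ∈ (Finset.Icc 1 ⌊N⌋₊).filter (fun n => YSmooth y n),
        f n / n * eC ((b : ℝ) / r * n)) =
      ∑ d ∈ r.divisors.filter (fun d => YSmooth y d),
        f d / d * (1 / (Nat.totient (r / d) : ℂ)) *
          ∑ ψ : DirichletCharacter ℂ (r / d),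
            gaussSum' ψ * (starRingEnd ℂ) (ψ (b : ZMod (r / d))) *
              ∑ n ∈ (Finset.Icc 1 ⌊N / d⌋₊).filter (fun n => YSmooth y n),
                f n * (starRingEnd ℂ) (ψ (n : ZMod (r / d))) / n := by
  rw [sum_filter_Icc_eq_sum_divisors_sum_coprime (fun _ _ => ySmooth_mul_iff)
    (Nat.one_le_iff_ne_zero.mp hr)]
  refine Finset.sum_congr rfl fun d hd => ?_
  rw [Nat.floor_div_natCast, divisor_term_eq_sum_coprime hf.2.1
    (Int.isCoprime_iff_gcd_eq_one.mpr hgcd) (Finset.mem_filter.mp hd).1]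

/-- **Proposition 2.3** (Granville–Soundararajan identity). -/
theorem statement7 (b : ℤ) (r : ℕ) (hb : b ≠ 0) (hr : 1 ≤ r) (hgcd : Int.gcd b r = 1)
    (f : ℕ → ℂ) (hf : CMUnit f) (N y : ℝ) (hN : 2 ≤ N) (hy : 2 ≤ y) :
    (∑ n ∈ (Finset.Icc 1 ⌊N⌋₊).filter (fun n => YSmooth y n),
        f n / n * eC ((b : ℝ) / r * n)) =
      ∑ d ∈ r.divisors.filter (fun d => YSmooth y d),
        f d / d * (1 / (Nat.totient (r / d) : ℂ)) *
          ∑ ψ : DirichletCharacter ℂ (r / d),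
            gaussSum' ψ * (starRingEnd ℂ) (ψ (b : ZMod (r / d))) *
              ∑ n ∈ (Finset.Icc 1 ⌊N / d⌋₊).filter (fun n => YSmooth y n),
                f n * (starRingEnd ℂ) (ψ (n : ZMod (r / d))) / n :=
  statement7_general b r hr hgcd f hf N y
end

section
/- Let g ≥ 3 be odd, k ≥ 2 be even, and θ ∈ (−1/2, 1/2]. Set k* := k/gcd(g, k). Then (1/k)·∑_{ℓ = 0}^{k−1} min_{z ∈ μ_g ∪ {0}} (1 − Re(z·e(θ − ℓ/k))) = 1 − (sin(π/g)/(k*·tan(π/(g·k*))))·F_{g·k*}(−g·k*·θ), where F_N(ω) := cos(2π{ω}/N) + tan(π/N)·sin(2π{ω}/N) and {ω} denotes the fractional part of ω. -/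
/-!
For `g ≥ 2` the minimum of `1 - Re (z e(y))` over `μ_g ∪ {0}` is `1 - cos (2π‖gy‖/g)`, with `‖·‖` the
distance to `ℤ`, attained at the root of unity nearest to `e(-y)`. This is a 1-periodic function of
`gθ - gℓ/k`, and as `ℓ` runs over `ℤ/k` the fractions `gℓ/k mod 1` run `gcd(g, k)` times over the
multiples of `1/k*`. So the average becomes the average of `cos (2π‖(ω + j)/k*‖/g)` over `j < k*`,
with `ω = -g k* θ`, which only depends on `{ω}`. As `g` is odd and `k` even, `k*` is even, so the
points `({ω} + j)/k*` split evenly between `[0, 1/2)` and `[1/2, 1)`, and on each half the sum is a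
sum of cosines in arithmetic progression.
-/

open Complex Finset
open scoped Classical

/-- `F_N(ω) = cos(2π{ω}/N) + tan(π/N)·sin(2π{ω}/N)`. -/
noncomputable def FN (N : ℕ) (ω : ℝ) : ℝ :=
  Real.cos (2 * Real.pi * Int.fract ω / N) +
    Real.tan (Real.pi / N) * Real.sin (2 * Real.pi * Int.fract ω / N)

open Function
open scoped Real

namespace Function.Periodic

section Nat

variable {M : Type*} [AddCommMonoid M] {f : ℕ → M} {N : ℕ}

theorem sum_range_mul (hf : Periodic f N) (d : ℕ) :
    ∑ i ∈ range (d * N), f i = d • ∑ i ∈ range N, f i := by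
  induction d with
  | zero => simp
  | succ d ih =>
    rw [add_mul, one_mul, sum_range_add, ih, succ_nsmul]
    congr 1
    exact sum_congr rfl fun i _ => by rw [add_comm, ← smul_eq_mul, hf.nsmul d i]

theorem sum_range_comp_mul (hf : Periodic f N) {a : ℕ} (ha : a.Coprime N) :
    ∑ i ∈ range N, f (a * i) = ∑ i ∈ range N, f i := by
  rcases N.eq_zero_or_pos with rfl | hN
  · simp
  have hinj : Set.InjOn (fun i => a * i % N) (range N : Set ℕ) := by
    intro i hi j hj hij
    have := Nat.ModEq.cancel_left_of_coprime (ha.symm.gcd_eq_one) hij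
    simpa [Nat.ModEq, Nat.mod_eq_of_lt (mem_range.mp hi), Nat.mod_eq_of_lt (mem_range.mp hj)]
      using this
  have hmaps : ∀ i ∈ range N, a * i % N ∈ range N := fun i _ => mem_range.mpr (Nat.mod_lt _ hN)
  simp_rw [← hf.map_mod_nat (a * _)]
  exact sum_nbij _ hmaps hinj (surjOn_of_injOn_of_card_le _ hmaps hinj le_rfl) fun _ _ => rfl

end Nat

section Real

variable {M : Type*} {F : ℝ → M}

theorem sum_range_add_mul_div [AddCommMonoid M] (hF : Periodic F 1) (x : ℝ) (a : ℕ) {k : ℕ}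
    (hk : k ≠ 0) :
    ∑ ℓ ∈ range k, F (x + a * ℓ / k) =
      a.gcd k • ∑ m ∈ range (k / a.gcd k), F (x + m / (k / a.gcd k : ℕ)) := by
  set d := a.gcd k
  set N := k / d
  have hd : 0 < d := Nat.gcd_pos_of_pos_right a (Nat.pos_of_ne_zero hk)
  have hkN : d * N = k := Nat.mul_div_cancel' (Nat.gcd_dvd_right a k)
  have haN : d * (a / d) = a := Nat.mul_div_cancel' (Nat.gcd_dvd_left a k)
  have hN : (N : ℝ) ≠ 0 := by
    rintro hN
    exact hk (by rw [← hkN, Nat.cast_eq_zero.mp hN, mul_zero])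
  set G : ℕ → M := fun m => F (x + m / N)
  have hG : Periodic G N := fun m => by
    simp only [G, Nat.cast_add, add_div, div_self hN, ← add_assoc]
    exact hF _
  have hGa : Periodic (fun ℓ => G (a / d * ℓ)) N := fun ℓ => by
    simp only [mul_add, ← smul_eq_mul (a / d) N]
    exact hG.nsmul _ _
  have hterm : ∀ ℓ : ℕ, F (x + a * ℓ / k) = G (a / d * ℓ) := fun ℓ => by
    have hkR : (k : ℝ) = d * N := by exact_mod_cast hkN.symm
    have haR : (a : ℝ) = d * (a / d : ℕ) := by exact_mod_cast haN.symm
    simp only [G, Nat.cast_mul]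
    rw [haR, hkR]
    field_simp
  simp only [hterm]
  rw [← hkN, hGa.sum_range_mul, hG.sum_range_comp_mul (Nat.coprime_div_gcd_div_gcd hd)]

theorem sum_range_comp_add_div [AddCommGroup M] (hF : Periodic F 1) (N : ℕ) :
    Periodic (fun ω => ∑ m ∈ range N, F ((ω + m) / N)) 1 := fun ω => by
  rcases eq_or_ne N 0 with rfl | hN
  · simp
  have hshift : ∀ m : ℕ, (ω + 1 + m) / N = (ω + (m + 1 : ℕ)) / N := fun m => by push_cast; ring
  have hwrap : F ((ω + N) / N) = F ((ω + (0 : ℕ)) / N) := by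
    rw [add_div, div_self (Nat.cast_ne_zero.mpr hN), hF, Nat.cast_zero, add_zero]
  simp only [hshift]
  have h1 := sum_range_succ' (fun m : ℕ => F ((ω + m) / N)) N
  have h2 := sum_range_succ (fun m : ℕ => F ((ω + m) / N)) N
  rw [hwrap] at h2
  exact add_right_cancel (h1.symm.trans h2)

end Real

end Function.Periodic

theorem eC_re (x : ℝ) : (eC x).re = Real.cos (2 * π * x) := by
  rw [eC, show (2 * π * I * x : ℂ) = (2 * π * x : ℝ) * I by push_cast; ring, exp_ofReal_mul_I_re]

theorem eC_add (x y : ℝ) : eC (x + y) = eC x * eC y := by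
  rw [eC, eC, eC, ← Complex.exp_add]
  push_cast
  ring_nf

theorem eC_pow (x : ℝ) (n : ℕ) : eC x ^ n = eC (n * x) := by
  rw [eC, eC, ← Complex.exp_nat_mul]
  push_cast
  ring_nf

theorem eC_intCast (n : ℤ) : eC n = 1 := by
  rw [eC, show (2 * π * I * (n : ℝ) : ℂ) = n * (2 * π * I) by push_cast; ring]
  exact Complex.exp_int_mul_two_pi_mul_I n

theorem eC_inv_natCast (n : ℕ) : eC (n : ℝ)⁻¹ = Complex.exp (2 * π * I / n) := by
  rw [eC]
  push_cast
  ring_nf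

/-- `cos (2π‖x‖/g)`, where `‖x‖ = |x - round x|` is the distance from `x` to `ℤ`; for `g ≥ 2` it is
`max_{z ∈ μ_g ∪ {0}} Re (z e(x/g))`. -/
noncomputable def nearestRootCos (g : ℕ) (x : ℝ) : ℝ := Real.cos (2 * π / g * |x - round x|)

section nearestRootCos

variable {g : ℕ}

theorem periodic_nearestRootCos (g : ℕ) : Periodic (nearestRootCos g) 1 := fun x => by
  simp only [nearestRootCos, round_add_one, Int.cast_add, Int.cast_one, add_sub_add_right_eq_sub]

theorem nearestRootCos_neg (x : ℝ) : nearestRootCos g (-x) = nearestRootCos g x := by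
  have h := norm_neg (x : UnitAddCircle)
  rw [← AddCircle.coe_neg, UnitAddCircle.norm_eq, UnitAddCircle.norm_eq] at h
  rw [nearestRootCos, nearestRootCos, h]

theorem nearestRootCos_nonneg (hg : 2 ≤ g) (x : ℝ) : 0 ≤ nearestRootCos g x := by
  have hg' : (2 : ℝ) ≤ g := by exact_mod_cast hg
  apply Real.cos_nonneg_of_mem_Icc
  constructor
  · linarith [show 0 ≤ 2 * π / g * |x - round x| by positivity, Real.pi_pos]
  · calc 2 * π / g * |x - round x| ≤ 2 * π / g * (1 / 2) := by gcongr; exact abs_sub_round x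
      _ = π / g := by ring
      _ ≤ π / 2 := by gcongr

theorem nearestRootCos_eq_cos_sub_round (x : ℝ) :
    nearestRootCos g x = Real.cos (2 * π / g * (x - round x)) := by
  rw [nearestRootCos, ← Real.cos_abs (_ * (x - _)), abs_mul,
    abs_of_nonneg (by positivity : (0 : ℝ) ≤ 2 * π / g)]

theorem nearestRootCos_of_mem_Ico {x : ℝ} (hx : x ∈ Set.Ico (-(1 / 2)) (1 / 2)) :
    nearestRootCos g x = Real.cos (2 * π * x / g) := by
  rw [nearestRootCos_eq_cos_sub_round, round_eq_zero_iff.mpr hx, Int.cast_zero, sub_zero]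
  ring_nf

/-- The point is that `‖t‖ ≤ |t - g n|` for every integer `n`. -/
theorem cos_le_nearestRootCos (hg : g ≠ 0) (t : ℝ) :
    Real.cos (2 * π * t / g) ≤ nearestRootCos g t := by
  have hg' : (0 : ℝ) < g := by positivity
  set n := round (t / g)
  have hperiod : Real.cos (2 * π * t / g) = Real.cos (2 * π * |t / g - n|) := by
    rw [← Real.cos_sub_int_mul_two_pi _ n, ← Real.cos_abs, ← abs_of_pos Real.two_pi_pos,
      ← abs_mul, abs_of_pos Real.two_pi_pos]
    ring_nf
  rw [hperiod, nearestRootCos]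
  apply Real.cos_le_cos_of_nonneg_of_le_pi (by positivity)
  · nlinarith [abs_sub_round (t / g), Real.pi_pos]
  · calc 2 * π / g * |t - round t| ≤ 2 * π / g * |t - (g * n : ℤ)| :=
          mul_le_mul_of_nonneg_left (round_le t _) (by positivity)
      _ = 2 * π * |t / g - n| := by
          rw [show t - ((g * n : ℤ) : ℝ) = g * (t / g - n) by push_cast; field_simp, abs_mul,
            abs_of_pos hg']
          field_simp

theorem isLeast_one_sub_re_mul_eC (hg : 2 ≤ g) (y : ℝ) :
    IsLeast ((fun z : ℂ => 1 - (z * eC y).re) '' {z : ℂ | z ^ g = 1 ∨ z = 0})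
      (1 - nearestRootCos g (g * y)) := by
  have hg0 : g ≠ 0 := by omega
  have : NeZero g := ⟨hg0⟩
  have hre : ∀ x, (eC x * eC y).re = Real.cos (2 * π * (g * y + g * x) / g) := fun x => by
    rw [← eC_add, eC_re, add_comm x]
    field_simp
  constructor
  · refine ⟨eC (-round ((g : ℝ) * y) / g), Or.inl ?_, ?_⟩
    · rw [eC_pow, mul_div_cancel₀ _ (Nat.cast_ne_zero.mpr hg0), ← Int.cast_neg, eC_intCast]
    · dsimp only
      rw [hre, mul_div_cancel₀ _ (Nat.cast_ne_zero.mpr hg0), nearestRootCos_eq_cos_sub_round]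
      congr 2
      ring
  · rintro _ ⟨z, hz | rfl, rfl⟩
    · obtain ⟨j, -, rfl⟩ := (Complex.isPrimitiveRoot_exp g hg0).eq_pow_of_pow_eq_one hz
      dsimp only
      rw [← eC_inv_natCast, eC_pow, hre, ← (periodic_nearestRootCos g).nat_mul j (g * y)]
      have := cos_le_nearestRootCos hg0 (g * y + j * 1)
      field_simp at this ⊢
      linarith
    · simpa using nearestRootCos_nonneg hg (g * y)

end nearestRootCos

theorem sin_mul_sum_nearestRootCos {g N : ℕ} (hg : g ≠ 0) (hN : Even N) (hN0 : N ≠ 0) {b : ℝ}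
    (hb0 : 0 ≤ b) (hb1 : b < 1) :
    Real.sin (π / (g * N)) * ∑ j ∈ range N, nearestRootCos g ((b + j) / N) =
      Real.sin (π / g) * Real.cos (2 * π * b / (g * N) - π / (g * N)) := by
  obtain ⟨H, rfl⟩ := hN
  have hH : (0 : ℝ) < H := by exact_mod_cast Nat.pos_of_ne_zero (by omega)
  have hg' : (0 : ℝ) < g := by exact_mod_cast Nat.pos_of_ne_zero hg
  set c := 2 * π / (g * (H + H))
  have hlow : ∀ j ∈ range H,
      nearestRootCos g ((b + j) / (H + H : ℕ)) = Real.cos (c * j + c * b) := fun j hj => by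
    have hj : (j : ℝ) + 1 ≤ H := by exact_mod_cast mem_range.mp hj
    rw [nearestRootCos_of_mem_Ico ⟨by push_cast; linarith [show 0 ≤ (b + j) / (H + H) by positivity],
      by push_cast; rw [div_lt_iff₀ (by positivity)]; linarith⟩]
    congr 1
    simp only [c]
    push_cast
    field_simp
    ring
  have hhigh : ∀ j ∈ range H, nearestRootCos g ((b + (H + j : ℕ)) / (H + H : ℕ)) =
      Real.cos (c * j + (c * b - π / g)) := fun j hj => by
    have hj : (j : ℝ) + 1 ≤ H := by exact_mod_cast mem_range.mp hj
    have hx : (b + (H + j : ℕ)) / (H + H : ℕ) - 1 ∈ Set.Ico (-(1 / 2) : ℝ) (1 / 2) := by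
      push_cast
      constructor
      · rw [le_sub_iff_add_le, le_div_iff₀ (by positivity)]; linarith
      · rw [sub_lt_iff_lt_add, div_lt_iff₀ (by positivity)]; linarith
    rw [← (periodic_nearestRootCos g).sub_eq, nearestRootCos_of_mem_Ico hx]
    congr 1
    simp only [c]
    push_cast
    field_simp
    ring
  rw [sum_range_add, sum_congr rfl hlow, sum_congr rfl hhigh, mul_add,
    show π / (g * (H + H : ℕ)) = c / 2 by push_cast; ring, Real.sin_mul_sum_cos,
    Real.sin_mul_sum_cos]
  have hHc : H * c / 2 = π / g / 2 := by simp only [c]; field_simp; ring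
  set P := π / g / 2
  rw [hHc, show π / g = 2 * P by ring, Real.sin_two_mul]
  set v := c * b - c / 2
  rw [show (H - 1) * c / 2 + c * b = P + v by linear_combination hHc,
    show (H - 1) * c / 2 + (c * b - 2 * P) = v - P by linear_combination hHc,
    show 2 * π * b / (g * (H + H : ℕ)) - c / 2 = v by push_cast; ring,
    Real.cos_add P v, Real.cos_sub v P]
  ring

theorem average_nearestRootCos {g N : ℕ} (hg : 2 ≤ g) (hN : Even N) (hN0 : N ≠ 0) (ω : ℝ) :
    (1 / N : ℝ) * ∑ j ∈ range N, nearestRootCos g ((ω + j) / N) =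
      Real.sin (π / g) / (N * Real.tan (π / (g * N))) * FN (g * N) ω := by
  have hfract : ∑ j ∈ range N, nearestRootCos g ((ω + j) / N) =
      ∑ j ∈ range N, nearestRootCos g ((Int.fract ω + j) / N) := by
    rw [← ((periodic_nearestRootCos g).sum_range_comp_add_div N).sub_int_mul_eq (x := ω) ⌊ω⌋,
      mul_one, Int.self_sub_floor]
  have hg' : (2 : ℝ) ≤ g := by exact_mod_cast hg
  have hN' : (2 : ℝ) ≤ N := by
    obtain ⟨H, rfl⟩ := hN
    exact_mod_cast (by omega : 2 ≤ H + H)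
  have hsum := sin_mul_sum_nearestRootCos (g := g) (by omega) hN hN0 (Int.fract_nonneg ω)
    (Int.fract_lt_one ω)
  have hFN : FN (g * N) ω = Real.cos (2 * π * Int.fract ω / (g * N)) +
      Real.tan (π / (g * N)) * Real.sin (2 * π * Int.fract ω / (g * N)) := by
    rw [FN, Nat.cast_mul]
  set E := π / (g * N)
  set X := 2 * π * Int.fract ω / (g * N)
  have hE0 : 0 < E := by positivity
  have hE : E < π / 2 := by
    rw [div_lt_div_iff₀ (by positivity) two_pos]
    nlinarith [Real.pi_pos, mul_le_mul hg' hN' zero_le_two (by positivity)]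
  have hsin : Real.sin E ≠ 0 := (Real.sin_pos_of_pos_of_lt_pi hE0 (by linarith)).ne'
  have hcos : Real.cos E ≠ 0 := (Real.cos_pos_of_mem_Ioo ⟨by linarith, hE⟩).ne'
  rw [hfract, hFN, Real.tan_eq_sin_div_cos]
  rw [Real.cos_sub] at hsum
  field_simp
  linear_combination hsum

theorem statement15_general (g k : ℕ) (hodd : Odd g) (hg : 3 ≤ g) (heven : Even k) (hk : 2 ≤ k)
    (θ : ℝ) (kstar : ℕ) (hkstar : kstar = k / Nat.gcd g k) :
    (1 / k : ℝ) * ∑ ℓ ∈ Finset.range k,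
        sInf ((fun z : ℂ => 1 - (z * eC (θ - (ℓ : ℝ) / k)).re) ''
          {z : ℂ | z ^ g = 1 ∨ z = 0}) =
      1 - Real.sin (Real.pi / g) / (kstar * Real.tan (Real.pi / (g * kstar))) *
        FN (g * kstar) (-((g * kstar : ℕ) : ℝ) * θ) := by
  have hk0 : k ≠ 0 := by omega
  have hdk : g.gcd k * kstar = k := hkstar ▸ Nat.mul_div_cancel' (Nat.gcd_dvd_right g k)
  have hkstar0 : kstar ≠ 0 := by rintro rfl; omega
  have hkstar_even : Even kstar := by
    rw [← hdk, Nat.even_mul] at heven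
    exact heven.resolve_left (Nat.not_even_iff_odd.mpr (hodd.of_dvd_nat (Nat.gcd_dvd_left g k)))
  have hterm : ∀ ℓ : ℕ, sInf ((fun z : ℂ => 1 - (z * eC (θ - (ℓ : ℝ) / k)).re) ''
      {z : ℂ | z ^ g = 1 ∨ z = 0}) = 1 - nearestRootCos g (-(g * θ) + g * ℓ / k) := fun ℓ => by
    rw [(isLeast_one_sub_re_mul_eC (by omega) _).csInf_eq, ← nearestRootCos_neg]
    congr 2
    ring
  have hsum : ∑ ℓ ∈ range k, nearestRootCos g (-(g * θ) + g * ℓ / k) =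
      g.gcd k • ∑ m ∈ range kstar, nearestRootCos g ((-((g * kstar : ℕ) : ℝ) * θ + m) / kstar) := by
    rw [(periodic_nearestRootCos g).sum_range_add_mul_div _ _ hk0, ← hkstar]
    congr 1
    refine sum_congr rfl fun m _ => congrArg _ ?_
    push_cast
    field_simp
  have hkR : (k : ℝ) = g.gcd k * kstar := by exact_mod_cast hdk.symm
  simp only [hterm, sum_sub_distrib, sum_const, card_range, hsum, nsmul_eq_mul, mul_one]
  rw [← average_nearestRootCos (by omega) hkstar_even hkstar0, hkR]
  have : (g.gcd k : ℝ) ≠ 0 := by exact_mod_cast (Nat.gcd_pos_of_pos_left k (by omega)).ne'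
  field_simp

/-- **Lemma 6.2**: evaluation of the average of `min_{z ∈ μ_g ∪ {0}} (1 - Re z·e(θ - ℓ/k))`. -/
theorem statement15 (g k : ℕ) (hodd : Odd g) (hg : 3 ≤ g) (heven : Even k) (hk : 2 ≤ k)
    (θ : ℝ) (hθ1 : -(1 / 2) < θ) (hθ2 : θ ≤ 1 / 2)
    (kstar : ℕ) (hkstar : kstar = k / Nat.gcd g k) :
    (1 / k : ℝ) * ∑ ℓ ∈ Finset.range k,
        sInf ((fun z : ℂ => 1 - (z * eC (θ - (ℓ : ℝ) / k)).re) ''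
          {z : ℂ | z ^ g = 1 ∨ z = 0}) =
      1 - Real.sin (Real.pi / g) / (kstar * Real.tan (Real.pi / (g * kstar))) *
        FN (g * kstar) (-((g * kstar : ℕ) : ℝ) * θ) :=
  statement15_general g k hodd hg heven hk θ kstar hkstar
end

section
/- Let g ≥ 3 be odd, k ≥ 2 be even, θ ∈ (−1/2, 1/2], and set k* := k/gcd(g, k). For ℓ ∈ ℤ let n_ℓ be the unique integer in (−g/2, g/2] such that θ − ℓ/k − n_ℓ/g lies in (−1/(2g), 1/(2g)] modulo 1, and define f(ℓ) := −(g·ℓ + k·n_ℓ). If ℓ₁ ≡ ℓ₂ (mod k*), then f(ℓ₁) ≡ f(ℓ₂) (mod gk). -/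
open Complex Finset
open scoped Classical

section NEll

/-- The defining property of `n_ℓ`: `n ℓ` is the integer in `(-g/2, g/2]` such that
`θ - ℓ/k - n ℓ / g` lies in `(-1/(2g), 1/(2g)]` modulo 1. -/
def NEllProp (g k : ℕ) (θ : ℝ) (n : ℤ → ℤ) : Prop :=
  ∀ ℓ : ℤ, (-(g : ℝ) / 2 < (n ℓ : ℝ) ∧ (n ℓ : ℝ) ≤ (g : ℝ) / 2) ∧
    ∃ N : ℤ, -(1 / (2 * (g : ℝ))) < θ - (ℓ : ℝ) / k - (n ℓ : ℝ) / g - N ∧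
      θ - (ℓ : ℝ) / k - (n ℓ : ℝ) / g - N ≤ 1 / (2 * (g : ℝ))

end NEll

/-! `n ℓ + g N_ℓ` is the integer nearest to `g (θ - ℓ/k)` (ties rounded down), i.e.
`⌈g (θ - ℓ/k) - 1/2⌉`. If `k* ∣ ℓ₂ - ℓ₁` then `k ∣ g (ℓ₂ - ℓ₁)`, so the two real numbers differ by
the integer `c = g (ℓ₂ - ℓ₁)/k` and so do their roundings; hence `k (n ℓ₁ - n ℓ₂) = g (ℓ₂ - ℓ₁)`
modulo `g k`, which is `f ℓ₁ ≡ f ℓ₂`. -/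
theorem Int.dvd_mul_of_div_gcd_dvd {g k : ℕ} {m : ℤ} (h : ((k / Nat.gcd g k : ℕ) : ℤ) ∣ m) :
    (k : ℤ) ∣ g * m := by
  have hdk : ((Nat.gcd g k : ℕ) : ℤ) ∣ k := Int.natCast_dvd_natCast.mpr (Nat.gcd_dvd_right g k)
  have hdg : ((Nat.gcd g k : ℕ) : ℤ) ∣ g := Int.natCast_dvd_natCast.mpr (Nat.gcd_dvd_left g k)
  push_cast at h
  exact (Int.dvd_mul_of_div_dvd hdk h).trans (mul_dvd_mul_right hdg m)

theorem NEllProp.exists_add_mul_eq_ceil {g k : ℕ} {θ : ℝ} {n : ℤ → ℤ}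
    (hn : NEllProp g k θ n) (ℓ : ℤ) :
    ∃ N : ℤ, ⌈g * (θ - ℓ / k) - 1 / 2⌉ = n ℓ + g * N := by
  obtain ⟨⟨hlo, hhi⟩, N, hNlo, hNhi⟩ := hn ℓ
  have hg : (0 : ℝ) < g := by linarith
  have hscaled : g * (θ - ℓ / k - n ℓ / g - N) = g * (θ - ℓ / k) - (n ℓ + g * N : ℤ) := by
    push_cast
    field_simp
    ring
  have hlo' := mul_lt_mul_of_pos_left hNlo hg
  have hhi' := mul_le_mul_of_nonneg_left hNhi hg.le
  have hhalf : (g : ℝ) * (1 / (2 * g)) = 1 / 2 := by field_simp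
  rw [hscaled, mul_neg, hhalf] at hlo'
  rw [hscaled, hhalf] at hhi'
  refine ⟨N, Int.ceil_eq_iff.mpr ⟨?_, ?_⟩⟩ <;> linarith

theorem statement16_general (g k : ℕ) (hk : 2 ≤ k) (θ : ℝ)
    (n : ℤ → ℤ) (hn : NEllProp g k θ n)
    (f : ℤ → ℤ) (hf : ∀ ℓ : ℤ, f ℓ = -((g : ℤ) * ℓ + (k : ℤ) * n ℓ))
    (kstar : ℕ) (hkstar : kstar = k / Nat.gcd g k)
    (ℓ₁ ℓ₂ : ℤ) (h : ℓ₁ ≡ ℓ₂ [ZMOD (kstar : ℤ)]) :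
    f ℓ₁ ≡ f ℓ₂ [ZMOD ((g : ℤ) * k)] := by
  subst hkstar
  obtain ⟨c, hc⟩ := Int.dvd_mul_of_div_gcd_dvd h.dvd
  obtain ⟨N₁, hN₁⟩ := hn.exists_add_mul_eq_ceil ℓ₁
  obtain ⟨N₂, hN₂⟩ := hn.exists_add_mul_eq_ceil ℓ₂
  have hshift : g * (θ - ℓ₁ / k) - 1 / 2 = g * (θ - ℓ₂ / k) - 1 / 2 + (c : ℤ) := by
    have hk0 : (k : ℝ) ≠ 0 := by positivity
    have hcR : (g : ℝ) * (ℓ₂ - ℓ₁) = k * c := by exact_mod_cast hc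
    field_simp
    linear_combination 2 * hcR
  have hround : n ℓ₁ + g * N₁ = n ℓ₂ + g * N₂ + c := by
    rw [← hN₁, ← hN₂, hshift, Int.ceil_add_intCast]
  refine Int.modEq_iff_dvd.mpr ⟨N₂ - N₁, ?_⟩
  rw [hf, hf]
  linear_combination (k : ℤ) * hround - hc

/-- **Lemma 6.3**: `ℓ₁ ≡ ℓ₂ (mod k*)` implies `f(ℓ₁) ≡ f(ℓ₂) (mod gk)`. -/
theorem statement16 (g k : ℕ) (hodd : Odd g) (hg : 3 ≤ g) (heven : Even k) (hk : 2 ≤ k)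
    (θ : ℝ) (hθ1 : -(1 / 2) < θ) (hθ2 : θ ≤ 1 / 2)
    (n : ℤ → ℤ) (hn : NEllProp g k θ n)
    (f : ℤ → ℤ) (hf : ∀ ℓ : ℤ, f ℓ = -((g : ℤ) * ℓ + (k : ℤ) * n ℓ))
    (kstar : ℕ) (hkstar : kstar = k / Nat.gcd g k)
    (ℓ₁ ℓ₂ : ℤ) (h : ℓ₁ ≡ ℓ₂ [ZMOD (kstar : ℤ)]) :
    f ℓ₁ ≡ f ℓ₂ [ZMOD ((g : ℤ) * k)] :=
  statement16_general g k hk θ n hn f hf kstar hkstar ℓ₁ ℓ₂ h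
end

section
/- Let g ≥ 3 be odd, k ≥ 2 be even, θ ∈ (−1/2, 1/2], and set k* := k/gcd(g, k). For ℓ ∈ ℤ let n_ℓ be the unique integer in (−g/2, g/2] such that θ − ℓ/k − n_ℓ/g lies in (−1/(2g), 1/(2g)] modulo 1, and define f(ℓ) := −(g·ℓ + k·n_ℓ). Then ℓ₁ ≡ ℓ₂ (mod k*) if and only if f(ℓ₁) ≡ f(ℓ₂) (mod k). -/
open Complex Finset
open scoped Classical

/-!
Modulo `k` the term `k · n_ℓ` vanishes, so `f(ℓ) ≡ -g·ℓ (mod k)`; and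
multiplication by `g` is injective modulo `k` exactly up to congruence modulo `k / gcd(g, k)`.
-/

namespace Int

theorem mul_left_modEq_mul_left_iff {m : ℤ} (hm : 0 < m) (a b c : ℤ) :
    c * a ≡ c * b [ZMOD m] ↔ a ≡ b [ZMOD m / gcd m c] := by
  refine ⟨ModEq.cancel_left_div_gcd hm, fun h => h.mul_left'.of_dvd ?_⟩
  -- `c * (m / d) = (c / d) * m` with `d = gcd m c`
  refine ⟨c / gcd m c, ?_⟩
  rw [← Int.mul_ediv_assoc _ (gcd_dvd_left ..), Int.mul_ediv_assoc' _ (gcd_dvd_right ..),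
    mul_comm m]

theorem neg_add_mul_modEq_neg_add_mul_iff (m a b x y : ℤ) :
    -(a + m * x) ≡ -(b + m * y) [ZMOD m] ↔ a ≡ b [ZMOD m] := by
  rw [neg_modEq_neg]
  simp only [ModEq, add_mul_emod_self_left]

end Int

theorem statement17_general (g k : ℕ) (hk : 2 ≤ k)
    (n : ℤ → ℤ)
    (f : ℤ → ℤ) (hf : ∀ ℓ : ℤ, f ℓ = -((g : ℤ) * ℓ + (k : ℤ) * n ℓ))
    (kstar : ℕ) (hkstar : kstar = k / Nat.gcd g k)
    (ℓ₁ ℓ₂ : ℤ) :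
    ℓ₁ ≡ ℓ₂ [ZMOD (kstar : ℤ)] ↔ f ℓ₁ ≡ f ℓ₂ [ZMOD (k : ℤ)] := by
  have hkstar' : (kstar : ℤ) = k / Int.gcd k g := by
    rw [hkstar, Nat.gcd_comm, Int.gcd_natCast_natCast, Int.natCast_div]
  rw [hf, hf, Int.neg_add_mul_modEq_neg_add_mul_iff,
    Int.mul_left_modEq_mul_left_iff (by omega), hkstar']

/-- **Lemma 6.4**: `ℓ₁ ≡ ℓ₂ (mod k*)` if and only if `f(ℓ₁) ≡ f(ℓ₂) (mod k)`. -/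
theorem statement17 (g k : ℕ) (hodd : Odd g) (hg : 3 ≤ g) (heven : Even k) (hk : 2 ≤ k)
    (θ : ℝ) (hθ1 : -(1 / 2) < θ) (hθ2 : θ ≤ 1 / 2)
    (n : ℤ → ℤ) (hn : NEllProp g k θ n)
    (f : ℤ → ℤ) (hf : ∀ ℓ : ℤ, f ℓ = -((g : ℤ) * ℓ + (k : ℤ) * n ℓ))
    (kstar : ℕ) (hkstar : kstar = k / Nat.gcd g k)
    (ℓ₁ ℓ₂ : ℤ) :
    ℓ₁ ≡ ℓ₂ [ZMOD (kstar : ℤ)] ↔ f ℓ₁ ≡ f ℓ₂ [ZMOD (k : ℤ)] :=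
  statement17_general g k hk n f hf kstar hkstar ℓ₁ ℓ₂
end

section
/- Let g ≥ 3 be odd, k ≥ 2 be even, θ ∈ (−1/2, 1/2], and set k* := k/gcd(g, k). For ℓ ∈ ℤ let n_ℓ be the unique integer in (−g/2, g/2] such that θ − ℓ/k − n_ℓ/g lies in (−1/(2g), 1/(2g)] modulo 1, and define f(ℓ) := −(g·ℓ + k·n_ℓ). Then the map ℓ ↦ f(ℓ), restricted to the integers in the interval [−k*/2 + k*θ, k*/2 + k*θ), is an injection into the set of integers in the interval (−k/2 − g·k·θ, k/2 − g·k·θ]. -/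
open Complex Finset
open scoped Classical

/-! For `ℓ` in the window `[-k*/2 + k*θ, k*/2 + k*θ)`, since `k* ≤ k` and `|θ| ≤ 1/2`, the number
`θ - ℓ/k` lies in `(-1/2, 1/2]`; since `g` is odd, `|n_ℓ/g| ≤ 1/2 - 1/(2g)`. Hence the integer `N`
with `θ - ℓ/k - n_ℓ/g - N ∈ (-1/(2g), 1/(2g)]` is `0`, and multiplying by `gk` puts `f(ℓ)` in
`(-k/2 - gkθ, k/2 - gkθ]`. If `f(ℓ₁) = f(ℓ₂)`, then `gℓ₁ ≡ gℓ₂ (mod k)`, so `ℓ₁ ≡ ℓ₂ (mod k*)`,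
and two points of a half-open window of length `k*` that are congruent mod `k*` coincide. -/
lemma abs_div_le_half_sub_of_odd {g : ℕ} (hg : Odd g) {m : ℤ} (h₁ : -(g : ℝ) / 2 < m)
    (h₂ : (m : ℝ) ≤ g / 2) : |(m : ℝ) / g| ≤ 1 / 2 - 1 / (2 * g) := by
  have hg₀ : (0 : ℝ) < g := by exact_mod_cast hg.pos
  have h₁' : -(g : ℤ) < 2 * m := by exact_mod_cast (by linarith : -(g : ℝ) < 2 * m)
  have h₂' : 2 * m ≤ (g : ℤ) := by exact_mod_cast (by linarith : 2 * (m : ℝ) ≤ g)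
  obtain ⟨j, hj⟩ := hg
  have hm : |2 * (m : ℝ)| ≤ g - 1 := by
    rw [abs_le]
    constructor
    · exact_mod_cast (by omega : -((g : ℤ) - 1) ≤ 2 * m)
    · exact_mod_cast (by omega : 2 * m ≤ (g : ℤ) - 1)
  rw [abs_mul, abs_two] at hm
  rw [abs_div, abs_of_pos hg₀, div_le_iff₀ hg₀]
  field_simp
  linarith

lemma sub_div_mem_Ioc_of_mem_Ico {κ k θ x : ℝ} (hκk : κ ≤ k)
    (hθ : θ ∈ Set.Ioc (-(1 / 2)) (1 / 2)) (hx : x ∈ Set.Ico (-κ / 2 + κ * θ) (κ / 2 + κ * θ)) :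
    θ - x / k ∈ Set.Ioc (-(1 / 2)) (1 / 2) := by
  obtain ⟨hθ₁, hθ₂⟩ := hθ
  obtain ⟨hx₁, hx₂⟩ := hx
  have hk : 0 < k := by linarith
  have hθk : θ - x / k = (k * θ - x) / k := by field_simp
  rw [hθk, Set.mem_Ioc, lt_div_iff₀ hk, div_le_iff₀ hk]
  constructor
  · nlinarith [mul_nonneg (sub_nonneg.2 hκk) (by linarith : (0 : ℝ) ≤ 1 + 2 * θ)]
  · nlinarith [mul_nonneg (sub_nonneg.2 hκk) (by linarith : (0 : ℝ) ≤ 1 - 2 * θ)]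

lemma Int.eq_zero_of_sub_mem_Ioc {x ε : ℝ} {N : ℤ} (hx : x ∈ Set.Ioc (ε - 1) (1 - ε))
    (hN : x - N ∈ Set.Ioc (-ε) ε) : N = 0 := by
  have h : |(N : ℝ)| < 1 := abs_lt.2 ⟨by linarith [hx.1, hN.2], by linarith [hx.2, hN.1]⟩
  exact Int.abs_lt_one_iff.1 (by exact_mod_cast h)

theorem NEllProp.sub_mem_Ioc {g k : ℕ} {θ : ℝ} {n : ℤ → ℤ} (hn : NEllProp g k θ n) (hg : Odd g)
    (hθ : θ ∈ Set.Ioc (-(1 / 2)) (1 / 2)) {κ : ℝ} (hκk : κ ≤ k) {ℓ : ℤ}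
    (hℓ : (ℓ : ℝ) ∈ Set.Ico (-κ / 2 + κ * θ) (κ / 2 + κ * θ)) :
    θ - ℓ / k - n ℓ / g ∈ Set.Ioc (-(1 / (2 * (g : ℝ)))) (1 / (2 * g)) := by
  obtain ⟨⟨hn₁, hn₂⟩, N, hN⟩ := hn ℓ
  have hθℓ := sub_div_mem_Ioc_of_mem_Ico hκk hθ hℓ
  have hnℓ := abs_le.1 (abs_div_le_half_sub_of_odd hg hn₁ hn₂)
  obtain rfl : N = 0 := Int.eq_zero_of_sub_mem_Ioc (ε := 1 / (2 * g))
    ⟨by linarith [hθℓ.1, hnℓ.2], by linarith [hθℓ.2, hnℓ.1]⟩ hN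
  simpa using hN

lemma neg_mul_add_mul_mem_Ioc {g k θ x y : ℝ} (hg : 0 < g) (hk : 0 < k)
    (h : θ - x / k - y / g ∈ Set.Ioc (-(1 / (2 * g))) (1 / (2 * g))) :
    -(g * x + k * y) ∈ Set.Ioc (-k / 2 - g * k * θ) (k / 2 - g * k * θ) := by
  have hgk : 0 < g * k := mul_pos hg hk
  have hscale : g * k * (θ - x / k - y / g) = g * k * θ - (g * x + k * y) := by
    field_simp
    ring
  have hε : g * k * (1 / (2 * g)) = k / 2 := by field_simp
  obtain ⟨h₁, h₂⟩ := h
  have h₁' := mul_lt_mul_of_pos_left h₁ hgk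
  have h₂' := mul_le_mul_of_nonneg_left h₂ hgk.le
  rw [hscale, mul_neg, hε] at h₁'
  rw [hscale, hε] at h₂'
  constructor <;> linarith

lemma Int.eq_of_mul_add_mul_eq_of_abs_sub_lt {g k : ℕ} {ℓ₁ ℓ₂ a b : ℤ}
    (h : g * ℓ₁ + k * a = g * ℓ₂ + k * b)
    (hℓ : |ℓ₂ - ℓ₁| < (k / Nat.gcd g k : ℕ)) : ℓ₁ = ℓ₂ := by
  have hk : 0 < (k : ℤ) := by
    exact_mod_cast Nat.pos_of_div_pos (by exact_mod_cast (abs_nonneg _).trans_lt hℓ)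
  have hmod : (g : ℤ) * ℓ₁ ≡ g * ℓ₂ [ZMOD k] :=
    Int.modEq_iff_dvd.2 ⟨a - b, by linear_combination -h⟩
  have hdvd := (hmod.cancel_left_div_gcd hk).dvd
  rw [Int.gcd_natCast_natCast, Nat.gcd_comm, ← Int.natCast_div] at hdvd
  exact (sub_eq_zero.1 (Int.eq_zero_of_abs_lt_dvd hdvd hℓ)).symm

theorem statement18_general (g k : ℕ) (hodd : Odd g)
    (θ : ℝ) (hθ1 : -(1 / 2) < θ) (hθ2 : θ ≤ 1 / 2)
    (n : ℤ → ℤ) (hn : NEllProp g k θ n)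
    (f : ℤ → ℤ) (hf : ∀ ℓ : ℤ, f ℓ = -((g : ℤ) * ℓ + (k : ℤ) * n ℓ))
    (kstar : ℕ) (hkstar : kstar = k / Nat.gcd g k) :
    (∀ ℓ : ℤ, -(kstar : ℝ) / 2 + kstar * θ ≤ (ℓ : ℝ) → (ℓ : ℝ) < (kstar : ℝ) / 2 + kstar * θ →
      (-(k : ℝ) / 2 - g * k * θ < (f ℓ : ℝ) ∧ (f ℓ : ℝ) ≤ (k : ℝ) / 2 - g * k * θ)) ∧
    (∀ ℓ₁ ℓ₂ : ℤ,
      -(kstar : ℝ) / 2 + kstar * θ ≤ (ℓ₁ : ℝ) → (ℓ₁ : ℝ) < (kstar : ℝ) / 2 + kstar * θ →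
      -(kstar : ℝ) / 2 + kstar * θ ≤ (ℓ₂ : ℝ) → (ℓ₂ : ℝ) < (kstar : ℝ) / 2 + kstar * θ →
      f ℓ₁ = f ℓ₂ → ℓ₁ = ℓ₂) := by
  have hks : (kstar : ℝ) ≤ k := by rw [hkstar]; exact_mod_cast Nat.div_le_self k _
  refine ⟨fun ℓ h₁ h₂ => ?_, fun ℓ₁ ℓ₂ h₁₁ h₁₂ h₂₁ h₂₂ hf₁₂ => ?_⟩
  · have hg : (0 : ℝ) < g := by exact_mod_cast hodd.pos
    have hk : (0 : ℝ) < k := by linarith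
    have hfℓ := neg_mul_add_mul_mem_Ioc hg hk (hn.sub_mem_Ioc hodd ⟨hθ1, hθ2⟩ hks ⟨h₁, h₂⟩)
    rw [hf]
    push_cast
    exact hfℓ
  · rw [hf, hf, neg_inj] at hf₁₂
    refine Int.eq_of_mul_add_mul_eq_of_abs_sub_lt hf₁₂ ?_
    rw [← hkstar]
    have h : |((ℓ₂ - ℓ₁ : ℤ) : ℝ)| < kstar := by
      push_cast
      rw [abs_lt]
      constructor <;> linarith
    exact_mod_cast h

/-- **Proposition 6.5**: `f` restricted to the integers in `[-k*/2 + k*θ, k*/2 + k*θ)` is an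
injection into the integers in `(-k/2 - gkθ, k/2 - gkθ]`. -/
theorem statement18 (g k : ℕ) (hodd : Odd g) (hg : 3 ≤ g) (heven : Even k) (hk : 2 ≤ k)
    (θ : ℝ) (hθ1 : -(1 / 2) < θ) (hθ2 : θ ≤ 1 / 2)
    (n : ℤ → ℤ) (hn : NEllProp g k θ n)
    (f : ℤ → ℤ) (hf : ∀ ℓ : ℤ, f ℓ = -((g : ℤ) * ℓ + (k : ℤ) * n ℓ))
    (kstar : ℕ) (hkstar : kstar = k / Nat.gcd g k) :
    (∀ ℓ : ℤ, -(kstar : ℝ) / 2 + kstar * θ ≤ (ℓ : ℝ) → (ℓ : ℝ) < (kstar : ℝ) / 2 + kstar * θ →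
      (-(k : ℝ) / 2 - g * k * θ < (f ℓ : ℝ) ∧ (f ℓ : ℝ) ≤ (k : ℝ) / 2 - g * k * θ)) ∧
    (∀ ℓ₁ ℓ₂ : ℤ,
      -(kstar : ℝ) / 2 + kstar * θ ≤ (ℓ₁ : ℝ) → (ℓ₁ : ℝ) < (kstar : ℝ) / 2 + kstar * θ →
      -(kstar : ℝ) / 2 + kstar * θ ≤ (ℓ₂ : ℝ) → (ℓ₂ : ℝ) < (kstar : ℝ) / 2 + kstar * θ →
      f ℓ₁ = f ℓ₂ → ℓ₁ = ℓ₂) :=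
  statement18_general g k hodd θ hθ1 hθ2 n hn f hf kstar hkstar
end
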